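/- The normalized Hecke symmetrizer acts as the identity on partially symmetric polynomials: if g is a polynomial in x_1,…,x_N over ℚ(t) that is symmetric in the last N−r variables x_{r+1},…,x_N, then Ŝ_{r+1}^N(g) = g, where Ŝ_{r+1}^N = (1/[N−r]_t!) · Σ_{w ∈ S_{(1^r;N−r)}} t^{C(N−r,2) − ℓ(w)} T_w. -/

import Mathlib

noncomputable section

open MvPolynomial

/-- The coefficient field `ℚ(t)`. -/
abbrev Ft : Type := RatFunc ℚ

/-- The field of rational functions in `x_1, …, x_N` over `ℚ(t)`. -/
abbrev KK (N : ℕ) : Type := FractionRing (MvPolynomial (Fin N) Ft)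

/-- The parameter `t`. -/
def tp {N : ℕ} : KK N :=
  algebraMap (MvPolynomial (Fin N) Ft) (KK N) (C RatFunc.X)

/-- The variable `x_i`. -/
def XV {N : ℕ} (i : Fin N) : KK N :=
  algebraMap (MvPolynomial (Fin N) Ft) (KK N) (X i)

/-- The field endomorphism `s` exchanging the variables `x_i` and `x_j`. -/
def swapK {N : ℕ} (i j : Fin N) : KK N →+* KK N :=
  IsFractionRing.lift (g := (algebraMap (MvPolynomial (Fin N) Ft) (KK N)).comp
      (rename (Equiv.swap i j)).toRingHom)
    (by
      rw [RingHom.coe_comp]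
      exact (IsFractionRing.injective _ _).comp
        (rename_injective _ (Equiv.swap i j).injective))

/-- The Demazure–Lusztig operator
`T(f) = s(f) + (1-t) · x_i · (f - s(f)) / (x_i - x_j)` (for `j = i+1`). -/
def TT {N : ℕ} (i j : Fin N) (f : KK N) : KK N :=
  swapK i j f + (1 - tp) * XV i * (f - swapK i j f) / (XV i - XV j)

/-- The Demazure operator `π(f) = (x_i f - s(x_i f)) / (x_i - x_j)`. -/
def dem {N : ℕ} (i j : Fin N) (f : KK N) : KK N :=
  (XV i * f - swapK i j (XV i * f)) / (XV i - XV j)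

/-- The canonical image of a polynomial in the rational function field. -/
def toK {N : ℕ} (f : MvPolynomial (Fin N) Ft) : KK N :=
  algebraMap (MvPolynomial (Fin N) Ft) (KK N) f
/-- The Demazure–Lusztig operator `T_i` (0-based index), identity if the
index is out of range. -/
def TNat {N : ℕ} (i : ℕ) (f : KK N) : KK N :=
  if h : i + 1 < N then TT ⟨i, by omega⟩ ⟨i + 1, h⟩ f else f

/-- Apply `T_{j_1} ∘ ⋯ ∘ T_{j_d}` for a word `[j_1, …, j_d]`. -/
def applyTWord {N : ℕ} (l : List ℕ) (f : KK N) : KK N := l.foldr TNat f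

/-- The simple transposition `s_i` (0-based), identity if out of range. -/
def swapPerm (N i : ℕ) : Equiv.Perm (Fin N) :=
  if h : i + 1 < N then Equiv.swap ⟨i, by omega⟩ ⟨i + 1, h⟩ else 1

/-- The permutation `s_{j_1} ⋯ s_{j_d}` of a word `[j_1, …, j_d]`. -/
def permOfWord (N : ℕ) (l : List ℕ) : Equiv.Perm (Fin N) :=
  (l.map (swapPerm N)).prod

/-- The Coxeter length of `w`: its number of inversions. -/
def invNum {N : ℕ} (w : Equiv.Perm (Fin N)) : ℕ :=
  ((Finset.univ : Finset (Fin N × Fin N)).filter fun p =>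
    p.1 < p.2 ∧ w p.2 < w p.1).card

-- value of adjacent swap
lemma valS {N a : ℕ} (h : a + 1 < N) (x : Fin N) :
    ((Equiv.swap (⟨a, by omega⟩ : Fin N) ⟨a+1, h⟩ x : Fin N) : ℕ) =
      if (x : ℕ) = a then a+1 else if (x : ℕ) = a+1 then a else x := by
  rcases eq_or_ne x ⟨a, by omega⟩ with rfl | hx
  · simp [Equiv.swap_apply_left]
  rcases eq_or_ne x ⟨a+1, h⟩ with rfl | hx'
  · simp [Equiv.swap_apply_right]
  · rw [Equiv.swap_apply_of_ne_of_ne hx hx']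
    rw [if_neg, if_neg]
    · exact fun hc => hx' (Fin.ext hc)
    · exact fun hc => hx (Fin.ext hc)

lemma invNum_swap_mul {N a : ℕ} (h : a + 1 < N) (w : Equiv.Perm (Fin N))
    (hd : ((w⁻¹ ⟨a, by omega⟩ : Fin N) : ℕ) < (w⁻¹ ⟨a+1, h⟩ : Fin N)) :
    invNum (Equiv.swap (⟨a, by omega⟩ : Fin N) ⟨a+1, h⟩ * w) = invNum w + 1 := by
  set A : Fin N := ⟨a, by omega⟩ with hA
  set B : Fin N := ⟨a+1, h⟩ with hB
  set s := Equiv.swap A B with hs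
  set u := w⁻¹ A with hu
  set v := w⁻¹ B with hv
  have key : (Finset.univ : Finset (Fin N × Fin N)).filter
      (fun p => p.1 < p.2 ∧ (s * w) p.2 < (s * w) p.1) =
      insert (u, v) ((Finset.univ : Finset (Fin N × Fin N)).filter
      (fun p => p.1 < p.2 ∧ w p.2 < w p.1)) := by
    ext p
    obtain ⟨p1, p2⟩ := p
    rw [Finset.mem_filter, Finset.mem_insert, Finset.mem_filter]
    simp only [Finset.mem_univ, true_and,
      Equiv.Perm.mul_apply, Prod.mk.injEq]
    have e1 : p1 = u ↔ ((w p1 : Fin N) : ℕ) = a := by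
      rw [hu, Equiv.Perm.eq_inv_iff_eq (f := w)]
      constructor
      · intro hh; rw [hh]
      · intro hh; exact Fin.ext hh
    have e2 : p2 = v ↔ ((w p2 : Fin N) : ℕ) = a + 1 := by
      rw [hv, Equiv.Perm.eq_inv_iff_eq (f := w)]
      constructor
      · intro hh; rw [hh]
      · intro hh; exact Fin.ext hh
    have e1' : p1 = v ↔ ((w p1 : Fin N) : ℕ) = a + 1 := by
      rw [hv, Equiv.Perm.eq_inv_iff_eq (f := w)]
      constructor
      · intro hh; rw [hh]
      · intro hh; exact Fin.ext hh
    have e2' : p2 = u ↔ ((w p2 : Fin N) : ℕ) = a := by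
      rw [hu, Equiv.Perm.eq_inv_iff_eq (f := w)]
      constructor
      · intro hh; rw [hh]
      · intro hh; exact Fin.ext hh
    have huv : (u : ℕ) < (v : ℕ) := hd
    rw [Fin.lt_iff_val_lt_val, Fin.lt_iff_val_lt_val, Fin.lt_iff_val_lt_val, hs,
      valS h (w p1), valS h (w p2)]
    set X := ((w p1 : Fin N) : ℕ)
    set Y := ((w p2 : Fin N) : ℕ)
    constructor
    · rintro ⟨hlt, hinv⟩
      by_cases hXa : X = a
      · by_cases hYb : Y = a + 1
        · left; exact ⟨e1.2 hXa, e2.2 hYb⟩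
        · right; refine ⟨hlt, ?_⟩
          simp only [hXa, eq_self_iff_true, if_true] at hinv ⊢
          by_cases hYa : Y = a
          · omega
          · simp only [if_neg hYa, if_neg hYb] at hinv ⊢; omega
      · by_cases hXb : X = a + 1
        · -- X = a+1: then p1 = v, so p2 ≠ u would... check Y
          by_cases hYa : Y = a
          · -- w-inversion present, but then p1 = v, p2 = u, p1 < p2 contradicts hd
            exfalso
            have : p1 = v := e1'.2 hXb
            have : p2 = u := e2'.2 hYa
            have : (v : ℕ) < (u : ℕ) := by
              have := hlt
              subst_eqs
              omega
            omega
          · right; refine ⟨hlt, ?_⟩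
            simp only [if_neg hXa, if_pos hXb] at hinv ⊢
            by_cases hYb : Y = a + 1
            · omega
            · simp only [if_neg hYa, if_neg hYb] at hinv ⊢; omega
        · right; refine ⟨hlt, ?_⟩
          simp only [if_neg hXa, if_neg hXb] at hinv ⊢
          by_cases hYa : Y = a
          · simp only [if_pos hYa] at hinv ⊢; omega
          · by_cases hYb : Y = a + 1
            · simp only [if_neg hYa, if_pos hYb] at hinv ⊢; omega
            · simp only [if_neg hYa, if_neg hYb] at hinv ⊢; omega
    · rintro (⟨h1, h2⟩ | ⟨hlt, hinv⟩)
      · have hX : X = a := e1.1 h1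
        have hY : Y = a + 1 := e2.1 h2
        subst h1 h2
        refine ⟨huv, ?_⟩
        simp only [hX, hY, eq_self_iff_true, if_true]
        rw [if_neg (by omega)]
        omega
      · refine ⟨hlt, ?_⟩
        have hXY : X ≠ Y := by
          intro hc
          exact absurd (w.injective (Fin.ext hc)) (ne_of_lt hlt)
        by_cases hXa : X = a
        · have hYnb : Y ≠ a + 1 := by
            intro hc
            -- then p1 = u, p2 = v: but w-inversion says Y < X = a, contra
            rw [hXa, hc] at hinv; omega
          simp only [hXa, eq_self_iff_true, if_true]
          by_cases hYa : Y = a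
          · omega
          · simp only [if_neg hYa, if_neg hYnb]; omega
        · by_cases hXb : X = a + 1
          · simp only [if_neg hXa, if_pos hXb]
            by_cases hYa : Y = a
            · exfalso
              have hp1 : p1 = v := e1'.2 hXb
              have hp2 : p2 = u := e2'.2 hYa
              rw [hp1, hp2] at hlt
              have : (v:ℕ) < (u:ℕ) := hlt
              omega
            · by_cases hYb : Y = a + 1
              · omega
              · simp only [if_neg hYa, if_neg hYb]; omega
          · simp only [if_neg hXa, if_neg hXb]
            by_cases hYa : Y = a
            · simp only [if_pos hYa]; omega
            · by_cases hYb : Y = a + 1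
              · simp only [if_neg hYa, if_pos hYb]; omega
              · simp only [if_neg hYa, if_neg hYb]; omega
  have hnm : (u, v) ∉ (Finset.univ : Finset (Fin N × Fin N)).filter
      (fun p => p.1 < p.2 ∧ w p.2 < w p.1) := by
    simp only [Finset.mem_filter, Finset.mem_univ, true_and, not_and]
    intro _
    have h1 : w u = A := by rw [hu]; simp
    have h2 : w v = B := by rw [hv]; simp
    rw [h1, h2, Fin.lt_iff_val_lt_val]
    simp [hA, hB]
  rw [invNum, key, Finset.card_insert_of_notMem hnm, invNum]

lemma invNum_swap_mul_desc {N a : ℕ} (h : a + 1 < N) (w : Equiv.Perm (Fin N))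
    (hd : ((w⁻¹ ⟨a+1, h⟩ : Fin N) : ℕ) < (w⁻¹ ⟨a, by omega⟩ : Fin N)) :
    invNum w = invNum (Equiv.swap (⟨a, by omega⟩ : Fin N) ⟨a+1, h⟩ * w) + 1 := by
  set A : Fin N := ⟨a, by omega⟩
  set B : Fin N := ⟨a+1, h⟩
  set s := Equiv.swap A B with hs
  have h1 : (s * w)⁻¹ A = w⁻¹ B := by
    simp [hs, mul_inv_rev, Equiv.swap_apply_left]
  have h2 : (s * w)⁻¹ B = w⁻¹ A := by
    simp [hs, mul_inv_rev, Equiv.swap_apply_right]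
  have := invNum_swap_mul h (s * w) (by rw [h1, h2]; exact hd)
  rw [← mul_assoc, ← hs, Equiv.swap_mul_self, one_mul] at this
  exact this

lemma inv_ne_inv {N a : ℕ} (h : a + 1 < N) (w : Equiv.Perm (Fin N)) :
    ((w⁻¹ ⟨a, by omega⟩ : Fin N) : ℕ) ≠ (w⁻¹ ⟨a+1, h⟩ : Fin N) := by
  intro hc
  have : w⁻¹ ⟨a, by omega⟩ = w⁻¹ ⟨a+1, h⟩ := Fin.ext hc
  have := (w⁻¹).injective this
  simp [Fin.ext_iff] at this

lemma invNum_swap_mul_le {N a : ℕ} (h : a + 1 < N) (w : Equiv.Perm (Fin N)) :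
    invNum (Equiv.swap (⟨a, by omega⟩ : Fin N) ⟨a+1, h⟩ * w) ≤ invNum w + 1 := by
  rcases lt_or_gt_of_ne (inv_ne_inv h w) with hd | hd
  · rw [invNum_swap_mul h w hd]
  · rw [invNum_swap_mul_desc h w hd]; omega

lemma invNum_inv {N : ℕ} (w : Equiv.Perm (Fin N)) : invNum w⁻¹ = invNum w := by
  unfold invNum
  apply Finset.card_nbij' (i := fun p => (w⁻¹ p.2, w⁻¹ p.1)) (j := fun p => (w p.2, w p.1))
  · rintro ⟨p1, p2⟩ hp
    simp only [Finset.mem_coe, Finset.mem_filter, Finset.mem_univ, true_and] at hp ⊢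
    exact ⟨hp.2, by simpa using hp.1⟩
  · rintro ⟨p1, p2⟩ hp
    simp only [Finset.mem_coe, Finset.mem_filter, Finset.mem_univ, true_and] at hp ⊢
    exact ⟨hp.2, by simpa using hp.1⟩
  · rintro ⟨p1, p2⟩ _; simp
  · rintro ⟨p1, p2⟩ _; simp

lemma invNum_mul_swap {N a : ℕ} (h : a + 1 < N) (w : Equiv.Perm (Fin N))
    (hd : ((w ⟨a, by omega⟩ : Fin N) : ℕ) < (w ⟨a+1, h⟩ : Fin N)) :
    invNum (w * Equiv.swap (⟨a, by omega⟩ : Fin N) ⟨a+1, h⟩) = invNum w + 1 := by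
  set A : Fin N := ⟨a, by omega⟩
  set B : Fin N := ⟨a+1, h⟩
  set s := Equiv.swap A B with hs
  have e : (w * s)⁻¹ = s * w⁻¹ := by
    rw [mul_inv_rev, hs, Equiv.swap_inv]
  rw [← invNum_inv (w * s), e, invNum_swap_mul h w⁻¹ (by simpa using hd), invNum_inv]

def swapPerm' (N i : ℕ) : Equiv.Perm (Fin N) :=
  if h : i + 1 < N then Equiv.swap ⟨i, by omega⟩ ⟨i + 1, h⟩ else 1

def cyc (N r : ℕ) : ℕ → Equiv.Perm (Fin N)
  | 0 => 1
  | k+1 => cyc N r k * swapPerm' N (r+k)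

lemma young_inv_fix {N r : ℕ} {w : Equiv.Perm (Fin N)}
    (hw : ∀ i : Fin N, (i : ℕ) < r → w i = i) (i : Fin N) (hi : (i : ℕ) < r) :
    w⁻¹ i = i := by
  conv_lhs => rw [← hw i hi]
  exact w.symm_apply_apply i

lemma young_ge {N r : ℕ} {w : Equiv.Perm (Fin N)}
    (hw : ∀ i : Fin N, (i : ℕ) < r → w i = i) (x : Fin N) (hx : r ≤ (x : ℕ)) :
    r ≤ ((w x : Fin N) : ℕ) := by
  by_contra hc
  push_neg at hc
  have h2 := young_inv_fix hw (w x) hc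
  rw [show w⁻¹ (w x) = x from w.symm_apply_apply x] at h2
  rw [← h2] at hc
  omega

lemma cyc_apply {N r : ℕ} : ∀ (k : ℕ), r + k < N → ∀ x : Fin N,
    ((cyc N r k x : Fin N) : ℕ) =
      if (x : ℕ) < r then (x : ℕ) else if (x : ℕ) < r + k then (x : ℕ) + 1
        else if (x : ℕ) = r + k then r else (x : ℕ) := by
  intro k
  induction k with
  | zero =>
    intro hk x
    simp only [cyc, Equiv.Perm.one_apply]
    split_ifs <;> omega
  | succ k ih =>
    intro hk x
    have hk' : r + k < N := by omega
    have hs : r + k + 1 < N := by omega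
    rw [cyc, Equiv.Perm.mul_apply, swapPerm', dif_pos hs, ih hk' _, valS hs x]
    split_ifs <;> omega

lemma cyc_fix_lt {N r k : ℕ} (hk : r + k < N) (x : Fin N) (hx : (x : ℕ) < r) :
    cyc N r k x = x :=
  Fin.ext (by rw [cyc_apply k hk x, if_pos hx])

lemma cyc_top {N r k : ℕ} (hk : r + k < N) :
    cyc N r k ⟨r + k, hk⟩ = ⟨r, by omega⟩ := by
  apply Fin.ext
  rw [cyc_apply k hk _]
  simp only [Fin.val_mk]
  split_ifs <;> omega

lemma invNum_mul_cyc {N r : ℕ} {u : Equiv.Perm (Fin N)}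
    (hu : ∀ i : Fin N, (i : ℕ) < r + 1 → u i = i) :
    ∀ k, r + k < N → invNum (u * cyc N r k) = invNum u + k := by
  intro k
  induction k with
  | zero => intro _; simp [cyc]
  | succ k ih =>
    intro hk
    have hk' : r + k < N := by omega
    have hs : r + k + 1 < N := by omega
    have e : u * cyc N r (k+1) = (u * cyc N r k) * Equiv.swap ⟨r+k, by omega⟩ ⟨r+k+1, hs⟩ := by
      rw [cyc, swapPerm', dif_pos hs, mul_assoc]
    have v1 : (u * cyc N r k) ⟨r + k, by omega⟩ = (⟨r, by omega⟩ : Fin N) := by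
      rw [Equiv.Perm.mul_apply, cyc_top hk']
      exact hu _ (Nat.lt_succ_self r)
    have v2 : r + 1 ≤ (((u * cyc N r k) ⟨r + k + 1, hs⟩ : Fin N) : ℕ) := by
      rw [Equiv.Perm.mul_apply]
      have hfix : cyc N r k ⟨r + k + 1, hs⟩ = ⟨r + k + 1, hs⟩ := by
        apply Fin.ext
        rw [cyc_apply k hk' _]
        simp only [Fin.val_mk]
        split_ifs <;> omega
      rw [hfix]
      exact young_ge hu _ (by simp)
    rw [e, invNum_mul_swap hs _ ?_, ih hk']
    · omega
    · rw [v1]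
      exact Nat.lt_of_lt_of_le (Nat.lt_succ_self r) v2

lemma invNum_one {N : ℕ} : invNum (1 : Equiv.Perm (Fin N)) = 0 := by
  unfold invNum
  rw [Finset.card_eq_zero, Finset.filter_eq_empty_iff]
  rintro p -
  simp only [Equiv.Perm.one_apply, not_and]
  exact fun h h' => absurd h' (asymm h)

lemma poincare {F : Type} [CommRing F] (q : F) {N : ℕ} : ∀ (m r : ℕ), r + m = N →
    (∀ w ∈ Finset.univ.filter
        (fun w : Equiv.Perm (Fin N) => ∀ i : Fin N, (i : ℕ) < r → w i = i),
      invNum w ≤ m.choose 2) ∧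
    ∑ w ∈ Finset.univ.filter
        (fun w : Equiv.Perm (Fin N) => ∀ i : Fin N, (i : ℕ) < r → w i = i),
      q ^ (m.choose 2 - invNum w) =
      ∏ k ∈ Finset.range m, ∑ i ∈ Finset.range (k + 1), q ^ i := by
  intro m
  induction m with
  | zero =>
    intro r hrN
    subst hrN
    have hY : Finset.univ.filter
        (fun w : Equiv.Perm (Fin (r + 0)) => ∀ i : Fin (r + 0), (i : ℕ) < r → w i = i) =
        {1} := by
      ext w
      simp only [Finset.mem_filter, Finset.mem_univ, true_and, Finset.mem_singleton]
      constructor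
      · intro hw
        ext i
        rw [hw i (by omega), Equiv.Perm.one_apply]
      · rintro rfl i _
        rfl
    rw [hY]
    constructor
    · intro w hw
      rw [Finset.mem_singleton] at hw
      subst hw
      simp [invNum_one]
    · simp [invNum_one]
  | succ m ih =>
    intro r hrN
    have hrN' : r + 1 + m = N := by omega
    obtain ⟨ihb, ihs⟩ := ih (r + 1) hrN'
    have hrltN : r < N := by omega
    set Yr := Finset.univ.filter
        (fun w : Equiv.Perm (Fin N) => ∀ i : Fin N, (i : ℕ) < r → w i = i) with hYr
    set Yr1 := Finset.univ.filter
        (fun w : Equiv.Perm (Fin N) => ∀ i : Fin N, (i : ℕ) < r + 1 → w i = i) with hYr1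
    have hch : (m + 1).choose 2 = m.choose 2 + m := by
      rw [Nat.choose_succ_succ]
      simp [Nat.choose_one_right]
      omega
    -- the decomposition data
    have key : ∀ w ∈ Yr,
        ((w⁻¹ ⟨r, hrltN⟩ : Fin N) : ℕ) - r ≤ m ∧
        r + (((w⁻¹ ⟨r, hrltN⟩ : Fin N) : ℕ) - r) < N ∧
        (w * (cyc N r (((w⁻¹ ⟨r, hrltN⟩ : Fin N) : ℕ) - r))⁻¹) ∈ Yr1 ∧
        w = (w * (cyc N r (((w⁻¹ ⟨r, hrltN⟩ : Fin N) : ℕ) - r))⁻¹) *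
          cyc N r (((w⁻¹ ⟨r, hrltN⟩ : Fin N) : ℕ) - r) := by
      intro w hw
      have hw' : ∀ i : Fin N, (i : ℕ) < r → w i = i := (Finset.mem_filter.1 hw).2
      have hge : r ≤ ((w⁻¹ ⟨r, hrltN⟩ : Fin N) : ℕ) :=
        young_ge (fun i hi => young_inv_fix hw' i hi) _ (le_refl r)
      set k := ((w⁻¹ ⟨r, hrltN⟩ : Fin N) : ℕ) - r with hk
      have hrk : r + k < N := by
        have := (w⁻¹ ⟨r, hrltN⟩ : Fin N).isLt
        omega
      have hkm : k ≤ m := by omega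
      have hinvr : w⁻¹ ⟨r, hrltN⟩ = ⟨r + k, hrk⟩ := by
        apply Fin.ext
        simp only [Fin.val_mk]
        omega
      refine ⟨hkm, hrk, ?_, ?_⟩
      · apply Finset.mem_filter.2
        refine ⟨Finset.mem_univ _, ?_⟩
        intro i hi
        rcases Nat.lt_or_ge (i : ℕ) r with h1 | h1
        · have hfix : cyc N r k i = i := cyc_fix_lt hrk i h1
          have : (cyc N r k)⁻¹ i = i := by
            conv_lhs => rw [← hfix]
            exact (cyc N r k).symm_apply_apply i
          rw [Equiv.Perm.mul_apply, this]
          exact hw' i h1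
        · have hir : i = ⟨r, hrltN⟩ := Fin.ext (by simp only [Fin.val_mk]; omega)
          subst hir
          have : (cyc N r k)⁻¹ ⟨r, hrltN⟩ = ⟨r + k, hrk⟩ := by
            have := cyc_top hrk
            conv_lhs => rw [← this]
            exact (cyc N r k).symm_apply_apply _
          rw [Equiv.Perm.mul_apply, this, ← hinvr]
          exact w.apply_symm_apply _
      · group
    -- the bound
    have hbound : ∀ w ∈ Yr, invNum w ≤ (m + 1).choose 2 := by
      intro w hw
      obtain ⟨hkm, hrk, hu, hdec⟩ := key w hw
      have hu2 : ∀ i : Fin N, (i : ℕ) < r + 1 →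
          (w * (cyc N r (((w⁻¹ ⟨r, hrltN⟩ : Fin N) : ℕ) - r))⁻¹) i = i :=
        (Finset.mem_filter.1 hu).2
      have hadd := invNum_mul_cyc hu2 _ hrk
      rw [← hdec] at hadd
      have hb := ihb _ hu
      omega
    refine ⟨hbound, ?_⟩
    -- the bijection
    have hsum : ∑ w ∈ Yr, q ^ ((m + 1).choose 2 - invNum w) =
        ∑ p ∈ (Finset.range (m + 1)) ×ˢ Yr1,
          q ^ (m - p.1) * q ^ (m.choose 2 - invNum p.2) := by
      apply Finset.sum_nbij'
        (i := fun w => ((((w⁻¹ ⟨r, hrltN⟩ : Fin N) : ℕ) - r),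
          w * (cyc N r (((w⁻¹ ⟨r, hrltN⟩ : Fin N) : ℕ) - r))⁻¹))
        (j := fun p => p.2 * cyc N r p.1)
      · intro w hw
        obtain ⟨hkm, hrk, hu, _⟩ := key w hw
        rw [Finset.mem_product]
        exact ⟨Finset.mem_range.2 (by omega), hu⟩
      · rintro ⟨k, u⟩ hp
        rw [Finset.mem_product, Finset.mem_range] at hp
        obtain ⟨hk, hu⟩ := hp
        have hu2 : ∀ i : Fin N, (i : ℕ) < r + 1 → u i = i := (Finset.mem_filter.1 hu).2
        apply Finset.mem_filter.2
        refine ⟨Finset.mem_univ _, ?_⟩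
        intro i hi
        have hrk : r + k < N := by omega
        rw [Equiv.Perm.mul_apply, cyc_fix_lt hrk i hi]
        exact hu2 i (by omega)
      · intro w hw
        group
      · rintro ⟨k, u⟩ hp
        rw [Finset.mem_product, Finset.mem_range] at hp
        obtain ⟨hk, hu⟩ := hp
        have hu2 : ∀ i : Fin N, (i : ℕ) < r + 1 → u i = i := (Finset.mem_filter.1 hu).2
        have hrk : r + k < N := by omega
        have hfst : (u * cyc N r k)⁻¹ ⟨r, hrltN⟩ = ⟨r + k, hrk⟩ := by
          rw [mul_inv_rev, Equiv.Perm.mul_apply]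
          have h1 : u⁻¹ ⟨r, hrltN⟩ = ⟨r, hrltN⟩ :=
            young_inv_fix hu2 _ (by simp)
          rw [h1]
          have := cyc_top hrk
          conv_lhs => rw [← this]
          exact (cyc N r k).symm_apply_apply _
        have hfst' : (((u * cyc N r k)⁻¹ ⟨r, hrltN⟩ : Fin N) : ℕ) - r = k := by
          rw [hfst]; simp
        have hsnd : (u * cyc N r k) *
            (cyc N r ((((u * cyc N r k)⁻¹ ⟨r, hrltN⟩ : Fin N) : ℕ) - r))⁻¹ = u := by
          rw [hfst']
          group
        simp only [Prod.mk.injEq]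
        exact ⟨hfst', hsnd⟩
      · intro w hw
        obtain ⟨hkm, hrk, hu, hdec⟩ := key w hw
        have hu2 : ∀ i : Fin N, (i : ℕ) < r + 1 →
            (w * (cyc N r (((w⁻¹ ⟨r, hrltN⟩ : Fin N) : ℕ) - r))⁻¹) i = i :=
          (Finset.mem_filter.1 hu).2
        have hadd := invNum_mul_cyc hu2 _ hrk
        rw [← hdec] at hadd
        have hb := ihb _ hu
        show _ = q ^ (m - (((w⁻¹ ⟨r, hrltN⟩ : Fin N) : ℕ) - r)) * q ^ (m.choose 2 - invNum (w * (cyc N r (((w⁻¹ ⟨r, hrltN⟩ : Fin N) : ℕ) - r))⁻¹))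
        rw [← pow_add]
        congr 1
        omega
    rw [hsum, Finset.sum_product]
    have hstep : ∀ k ∈ Finset.range (m + 1),
        (∑ u ∈ Yr1, q ^ (m - k) * q ^ (m.choose 2 - invNum u)) =
        q ^ (m - k) * ∏ j ∈ Finset.range m, ∑ i ∈ Finset.range (j + 1), q ^ i := by
      intro k _
      rw [← Finset.mul_sum, ihs]
    rw [Finset.sum_congr rfl hstep, ← Finset.sum_mul]
    have hrefl : ∑ k ∈ Finset.range (m + 1), q ^ (m - k) =
        ∑ k ∈ Finset.range (m + 1), q ^ k := by
      have := Finset.sum_range_reflect (fun j => q ^ j) (m + 1)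
      simpa using this
    rw [hrefl, Finset.prod_range_succ]
    ring

lemma invNum_word_le {N : ℕ} : ∀ l : List ℕ, (∀ j ∈ l, j + 1 < N) →
    invNum (permOfWord N l) ≤ l.length := by
  intro l
  induction l with
  | nil => intro _; simp [permOfWord, invNum_one]
  | cons j l' ih =>
    intro hl
    have hj : j + 1 < N := hl j (by simp)
    have hperm : permOfWord N (j :: l') = swapPerm N j * permOfWord N l' := by
      simp [permOfWord]
    rw [hperm, swapPerm, dif_pos hj]
    have := invNum_swap_mul_le hj (permOfWord N l')
    have := ih (fun x hx => hl x (by simp [hx]))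
    simp only [List.length_cons]
    omega

lemma word_letters {N r : ℕ} : ∀ l : List ℕ, (∀ j ∈ l, j + 1 < N) →
    ∀ w : Equiv.Perm (Fin N), permOfWord N l = w → l.length = invNum w →
    (∀ i : Fin N, (i : ℕ) < r → w i = i) → ∀ j ∈ l, r ≤ j := by
  intro l
  induction l with
  | nil => intro _ _ _ _ _ j hj; exact absurd hj List.not_mem_nil
  | cons j l' ih =>
    intro hl w hw hlen hfix
    have hj : j + 1 < N := hl j (by simp)
    set A : Fin N := ⟨j, by omega⟩ with hA
    set B : Fin N := ⟨j + 1, hj⟩ with hB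
    set w' := permOfWord N l' with hw'
    have hperm : w = Equiv.swap A B * w' := by
      rw [← hw]
      simp [permOfWord, swapPerm, dif_pos hj, hw', hA, hB]
    have hle : invNum w' ≤ l'.length := invNum_word_le l' (fun x hx => hl x (by simp [hx]))
    have hlen' : invNum w = l'.length + 1 := by
      rw [← hlen]; simp
    -- trichotomy
    rcases lt_or_gt_of_ne (inv_ne_inv hj w') with hd | hd
    · -- ascent for w', so w has a descent at j
      have hasc := invNum_swap_mul hj w' hd
      rw [← hperm] at hasc
      have hlenw' : invNum w' = l'.length := by omega
      -- w⁻¹ A = w'⁻¹ B, w⁻¹ B = w'⁻¹ A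
      have hiA : w⁻¹ A = w'⁻¹ B := by
        rw [hperm, mul_inv_rev]
        simp [Equiv.swap_inv, Equiv.Perm.mul_apply, Equiv.swap_apply_left]
      have hiB : w⁻¹ B = w'⁻¹ A := by
        rw [hperm, mul_inv_rev]
        simp [Equiv.swap_inv, Equiv.Perm.mul_apply, Equiv.swap_apply_right]
      -- descent of w at j
      have hdesc : ((w⁻¹ B : Fin N) : ℕ) < ((w⁻¹ A : Fin N) : ℕ) := by
        rw [hiA, hiB]; exact hd
      -- show r ≤ j
      have hjr : r ≤ j := by
        by_contra hc
        push_neg at hc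
        have hvA : w⁻¹ A = A := young_inv_fix hfix A (by simp [hA]; omega)
        rcases Nat.lt_or_ge (j + 1) r with h1 | h1
        · have hvB : w⁻¹ B = B := young_inv_fix hfix B (by simp [hB]; omega)
          rw [hvA, hvB] at hdesc
          simp [hA, hB] at hdesc
        · have hjr1 : j + 1 = r := by omega
          have hvB : r ≤ ((w⁻¹ B : Fin N) : ℕ) :=
            young_ge (fun i hi => young_inv_fix hfix i hi) B (by simp [hB]; omega)
          rw [hvA] at hdesc
          simp only [hA, Fin.val_mk] at hdesc
          omega
      -- induction for the tail
      have hfix' : ∀ i : Fin N, (i : ℕ) < r → w' i = i := by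
        intro i hi
        have : w' = Equiv.swap A B * w := by
          rw [hperm, ← mul_assoc, Equiv.swap_mul_self, one_mul]
        rw [this, Equiv.Perm.mul_apply, hfix i hi]
        apply Equiv.swap_apply_of_ne_of_ne
        · intro hc; rw [hc] at hi; simp [hA] at hi; omega
        · intro hc; rw [hc] at hi; simp [hB] at hi; omega
      intro x hx
      rcases List.mem_cons.1 hx with rfl | hx'
      · exact hjr
      · exact ih (fun y hy => hl y (by simp [hy])) w' rfl hlenw'.symm hfix' x hx'
    · -- descent for w': contradiction with length
      exfalso
      have := invNum_swap_mul_desc hj w' hd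
      rw [← hperm] at this
      omega


lemma swapK_toK {N : ℕ} (i j : Fin N) (f : MvPolynomial (Fin N) Ft) :
    swapK i j (toK f) = toK (rename (Equiv.swap i j) f) := by
  rw [swapK, toK, toK, IsFractionRing.lift_algebraMap]
  rfl

lemma TNat_fix {N : ℕ} (j : ℕ) (hj : j + 1 < N) (g : MvPolynomial (Fin N) Ft)
    (h : rename (Equiv.swap (⟨j, by omega⟩ : Fin N) ⟨j + 1, hj⟩) g = g) :
    TNat j (toK g) = toK g := by
  rw [TNat, dif_pos hj, TT, swapK_toK, h, sub_self, mul_zero, zero_div, add_zero]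

lemma tp_pow_ne_one {N : ℕ} (n : ℕ) (hn : 0 < n) : (tp : KK N) ^ n ≠ 1 := by
  intro hc
  rw [tp, ← map_pow, ← map_pow] at hc
  have h1 : algebraMap (MvPolynomial (Fin N) Ft) (KK N) (C (RatFunc.X ^ n)) =
      algebraMap (MvPolynomial (Fin N) Ft) (KK N) 1 := by rw [hc, map_one]
  have h2 := IsFractionRing.injective (MvPolynomial (Fin N) Ft) (KK N) h1
  rw [← C_1, C_inj] at h2
  rw [← RatFunc.algebraMap_X, ← map_pow] at h2
  have h3 : algebraMap (Polynomial ℚ) (RatFunc ℚ) (Polynomial.X ^ n) =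
      algebraMap (Polynomial ℚ) (RatFunc ℚ) 1 := by rw [h2, map_one]
  have h4 := RatFunc.algebraMap_injective ℚ h3
  have h5 := congrArg Polynomial.natDegree h4
  rw [Polynomial.natDegree_X_pow, Polynomial.natDegree_one] at h5
  omega

lemma one_sub_tp_ne {N : ℕ} : (1 : KK N) - tp ≠ 0 := by
  rw [sub_ne_zero]
  intro hc
  exact tp_pow_ne_one 1 one_pos (by rw [pow_one, ← hc])

lemma geom_factor {N : ℕ} (k : ℕ) :
    ((1 : KK N) - tp ^ (k + 1)) / (1 - tp) = ∑ i ∈ Finset.range (k + 1), tp ^ i := by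
  have h := geom_sum_mul (tp : KK N) (k + 1)
  have h2 : (1 : KK N) - tp ^ (k + 1) =
      (∑ i ∈ Finset.range (k + 1), tp ^ i) * (1 - tp) := by
    linear_combination h
  rw [h2, mul_div_assoc, div_self one_sub_tp_ne, mul_one]

lemma geom_factor_ne {N : ℕ} (k : ℕ) :
    (∑ i ∈ Finset.range (k + 1), (tp : KK N) ^ i) ≠ 0 := by
  rw [← geom_factor]
  apply div_ne_zero _ one_sub_tp_ne
  rw [sub_ne_zero]
  intro hc
  exact tp_pow_ne_one (k + 1) (Nat.succ_pos k) hc.symm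

lemma applyTWord_fix {N r : ℕ} (g : MvPolynomial (Fin N) Ft)
    (hg : ∀ (i : ℕ) (h1 : r ≤ i) (h2 : i + 1 < N),
      rename (Equiv.swap (⟨i, Nat.lt_of_succ_lt h2⟩ : Fin N) ⟨i + 1, h2⟩) g = g) :
    ∀ l : List ℕ, (∀ j ∈ l, r ≤ j ∧ j + 1 < N) → applyTWord l (toK g) = toK g := by
  intro l
  induction l with
  | nil => intro _; rfl
  | cons j l' ih =>
    intro hl
    have hj := hl j (by simp)
    have : applyTWord (j :: l') (toK g) = TNat j (applyTWord l' (toK g)) := rfl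
    rw [this, ih (fun x hx => hl x (by simp [hx])), TNat_fix j hj.2 g (hg j hj.1 hj.2)]


/-- the normalized Hecke symmetrizer
`Ŝ_{r+1}^N = (1/[N-r]_t!) ∑_{w ∈ S_{(1^r; N-r)}} t^{C(N-r,2) - ℓ(w)} T_w`
acts as the identity on polynomials `g` that are symmetric in the last
`N - r` variables.  The Young subgroup `S_{(1^r; N-r)}` consists of the
permutations fixing the first `r` (0-based: `< r`) indices; `T_w` is computed
from any reduced word `red w` for `w` (supplied by the hypothesis `hred`); and
`[N-r]_t! = ∏_{k=1}^{N-r} (1 - t^k)/(1 - t)`. -/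
theorem hecke_symmetrizer_identity (N r : ℕ) (hr : r ≤ N)
    (g : MvPolynomial (Fin N) Ft)
    (hg : ∀ (i : ℕ) (h1 : r ≤ i) (h2 : i + 1 < N),
      rename (Equiv.swap (⟨i, by omega⟩ : Fin N) ⟨i + 1, h2⟩) g = g)
    (red : Equiv.Perm (Fin N) → List ℕ)
    (hred : ∀ w : Equiv.Perm (Fin N), (∀ i : Fin N, (i : ℕ) < r → w i = i) →
      permOfWord N (red w) = w ∧ (red w).length = invNum w ∧
        ∀ j ∈ red w, j + 1 < N) :
    (∏ k ∈ Finset.range (N - r), ((1 - tp ^ (k + 1)) / (1 - tp)))⁻¹ *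
        ∑ w ∈ Finset.univ.filter
            (fun w : Equiv.Perm (Fin N) => ∀ i : Fin N, (i : ℕ) < r → w i = i),
          tp ^ (Nat.choose (N - r) 2 - invNum w) * applyTWord (red w) (toK g) =
      toK g := by
  have hrm : r + (N - r) = N := by omega
  obtain ⟨hbound, hsum⟩ := poincare (tp : KK N) (N - r) r hrm
  have hcong : ∑ w ∈ Finset.univ.filter
      (fun w : Equiv.Perm (Fin N) => ∀ i : Fin N, (i : ℕ) < r → w i = i),
      tp ^ (Nat.choose (N - r) 2 - invNum w) * applyTWord (red w) (toK g) =
      ∑ w ∈ Finset.univ.filter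
      (fun w : Equiv.Perm (Fin N) => ∀ i : Fin N, (i : ℕ) < r → w i = i),
      tp ^ (Nat.choose (N - r) 2 - invNum w) * toK g := by
    apply Finset.sum_congr rfl
    intro w hw
    have hwfix : ∀ i : Fin N, (i : ℕ) < r → w i = i := (Finset.mem_filter.1 hw).2
    obtain ⟨h1, h2, h3⟩ := hred w hwfix
    have hlet := word_letters (red w) h3 w h1 h2 hwfix
    rw [applyTWord_fix g hg (red w) (fun j hj => ⟨hlet j hj, h3 j hj⟩)]
  rw [hcong, ← Finset.sum_mul, hsum]
  have hprod : ∏ k ∈ Finset.range (N - r), (((1 : KK N) - tp ^ (k + 1)) / (1 - tp)) =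
      ∏ k ∈ Finset.range (N - r), ∑ i ∈ Finset.range (k + 1), (tp : KK N) ^ i :=
    Finset.prod_congr rfl fun k _ => geom_factor k
  rw [hprod]
  exact inv_mul_cancel_left₀
    (Finset.prod_ne_zero_iff.2 fun k _ => geom_factor_ne k) _


end
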